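/- The spherical triangle-region integral. Let a ∈ [0,π] and let R ⊆ ℝ² be the region R = {(x,y) : x ≥ 0, y ≥ 0, a ≤ x + y, x ≤ a + y, y ≤ a + x, a + x + y ≤ 2π}. Then ∫∫_R sin(x)·sin(y) dx dy = π · sin(a). (In particular, for a ∈ (0,π], (1/sin a)·∫∫_R sin x sin y dx dy is a constant independent of a.) -/
import Mathlib

open Real MeasureTheory

/-- **The spherical triangle-region integral.** For `a ∈ [0, π]`, the integral of
`sin x · sin y` over the region of pairs `(x, y)` such that `(a, x, y)` satisfies the
spherical triangle conditions equals `π · sin a`. -/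
theorem integral_sin_sin_spherical_triangle_region (a : ℝ) (ha : a ∈ Set.Icc 0 π) :
    ∫ p in {p : ℝ × ℝ | 0 ≤ p.1 ∧ 0 ≤ p.2 ∧ a ≤ p.1 + p.2 ∧ p.1 ≤ a + p.2 ∧
        p.2 ≤ a + p.1 ∧ a + p.1 + p.2 ≤ 2 * π},
      Real.sin p.1 * Real.sin p.2 = π * Real.sin a := by
  obtain ⟨ha0, haπ⟩ := ha
  have hπ := Real.pi_pos
  set S : Set (ℝ × ℝ) := {p | 0 ≤ p.1 ∧ 0 ≤ p.2 ∧ a ≤ p.1 + p.2 ∧ p.1 ≤ a + p.2 ∧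
      p.2 ≤ a + p.1 ∧ a + p.1 + p.2 ≤ 2 * π} with hS
  -- slice description
  have hSeq : S = {p : ℝ × ℝ | p.2 ∈ Set.Icc |p.1 - a| (min (a + p.1) (2 * π - a - p.1))} := by
    ext ⟨x, y⟩
    simp only [hS, Set.mem_setOf_eq, Set.mem_Icc, le_min_iff, abs_sub_le_iff]
    constructor
    · rintro ⟨h1, h2, h3, h4, h5, h6⟩
      exact ⟨⟨by linarith, by linarith⟩, by linarith, by linarith⟩
    · rintro ⟨⟨h1, h2⟩, h3, h4⟩
      exact ⟨by linarith, by linarith, by linarith, by linarith, by linarith, by linarith⟩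
  have hclosed : IsClosed S := by
    have c1 : IsClosed {p : ℝ × ℝ | 0 ≤ p.1} := isClosed_le continuous_const continuous_fst
    have c2 : IsClosed {p : ℝ × ℝ | 0 ≤ p.2} := isClosed_le continuous_const continuous_snd
    have c3 : IsClosed {p : ℝ × ℝ | a ≤ p.1 + p.2} :=
      isClosed_le continuous_const (continuous_fst.add continuous_snd)
    have c4 : IsClosed {p : ℝ × ℝ | p.1 ≤ a + p.2} :=
      isClosed_le continuous_fst (continuous_const.add continuous_snd)
    have c5 : IsClosed {p : ℝ × ℝ | p.2 ≤ a + p.1} :=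
      isClosed_le continuous_snd (continuous_const.add continuous_fst)
    have c6 : IsClosed {p : ℝ × ℝ | a + p.1 + p.2 ≤ 2 * π} :=
      isClosed_le ((continuous_const.add continuous_fst).add continuous_snd) continuous_const
    rw [hS]
    simp only [Set.setOf_and]
    exact c1.inter (c2.inter (c3.inter (c4.inter (c5.inter c6))))
  have hmeas : MeasurableSet S := hclosed.measurableSet
  have hsub : S ⊆ Set.Icc (0, 0) (2 * π, 2 * π) := by
    rintro ⟨x, y⟩ ⟨h1, h2, h3, h4, h5, h6⟩
    simp only [Set.mem_Icc, Prod.mk_le_mk] at *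
    exact ⟨⟨h1, h2⟩, by linarith, by linarith⟩
  have hK : IsCompact S := isCompact_Icc.of_isClosed_subset hclosed hsub
  have hcont : Continuous fun p : ℝ × ℝ => Real.sin p.1 * Real.sin p.2 := by fun_prop
  have hIntOn : IntegrableOn (fun p : ℝ × ℝ => Real.sin p.1 * Real.sin p.2) S :=
    hcont.continuousOn.integrableOn_compact hK
  have hInd : Integrable (S.indicator fun p : ℝ × ℝ => Real.sin p.1 * Real.sin p.2)
      ((volume : Measure ℝ).prod volume) := by
    rw [← Measure.volume_eq_prod]
    exact hIntOn.integrable_indicator hmeas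
  rw [← integral_indicator hmeas, Measure.volume_eq_prod, MeasureTheory.integral_prod _ hInd]
  -- inner integral
  have key : ∀ x : ℝ,
      (∫ y, S.indicator (fun p : ℝ × ℝ => Real.sin p.1 * Real.sin p.2) (x, y)) =
      Set.indicator (Set.Icc 0 π) (fun x => 2 * Real.sin a * Real.sin x ^ 2) x := by
    intro x
    have hslice : ∀ y : ℝ, S.indicator (fun p : ℝ × ℝ => Real.sin p.1 * Real.sin p.2) (x, y) =
        (Set.Icc |x - a| (min (a + x) (2 * π - a - x))).indicator
          (fun y => Real.sin x * Real.sin y) y := by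
      intro y
      by_cases h : y ∈ Set.Icc |x - a| (min (a + x) (2 * π - a - x))
      · rw [Set.indicator_of_mem h]
        rw [Set.indicator_of_mem (by rw [hSeq]; exact h)]
      · rw [Set.indicator_of_notMem h]
        rw [Set.indicator_of_notMem (by rw [hSeq]; exact h)]
    simp_rw [hslice]
    rw [MeasureTheory.integral_indicator measurableSet_Icc]
    by_cases hx : x ∈ Set.Icc 0 π
    · obtain ⟨hx0, hxπ⟩ := hx
      have hlu : |x - a| ≤ min (a + x) (2 * π - a - x) := by
        rw [abs_sub_le_iff, le_min_iff, le_min_iff]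
        exact ⟨⟨by linarith, by linarith⟩, by linarith, by linarith⟩
      rw [Set.indicator_of_mem (Set.mem_Icc.mpr ⟨hx0, hxπ⟩)]
      rw [MeasureTheory.integral_Icc_eq_integral_Ioc,
        ← intervalIntegral.integral_of_le hlu, intervalIntegral.integral_const_mul,
        integral_sin, Real.cos_abs]
      have hmin : Real.cos (min (a + x) (2 * π - a - x)) = Real.cos (a + x) := by
        rcases le_total (a + x) (2 * π - a - x) with h | h
        · rw [min_eq_left h]
        · rw [min_eq_right h, show 2 * π - a - x = 2 * π - (a + x) by ring,
            Real.cos_sub, Real.cos_two_pi, Real.sin_two_pi]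
          ring
      rw [hmin, Real.cos_sub, Real.cos_add]
      ring
    · rw [Set.indicator_of_notMem hx]
      have hempty : min (a + x) (2 * π - a - x) < |x - a| := by
        rcases lt_or_ge x 0 with h | h
        · calc min (a + x) (2 * π - a - x) ≤ a + x := min_le_left _ _
            _ < a - x := by linarith
            _ ≤ |a - x| := le_abs_self _
            _ = |x - a| := abs_sub_comm _ _
        · have hxπ : π < x := by
            by_contra hle
            push_neg at hle
            exact hx ⟨h, hle⟩
          calc min (a + x) (2 * π - a - x) ≤ 2 * π - a - x := min_le_right _ _
            _ < x - a := by linarith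
            _ ≤ |x - a| := le_abs_self _
      rw [Set.Icc_eq_empty (not_le.mpr hempty), Measure.restrict_empty, integral_zero_measure]
  simp_rw [key]
  rw [MeasureTheory.integral_indicator measurableSet_Icc,
    MeasureTheory.integral_Icc_eq_integral_Ioc, ← intervalIntegral.integral_of_le hπ.le,
    intervalIntegral.integral_const_mul, integral_sin_sq]
  simp [Real.sin_pi]
  ring
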